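/- An infinite word x is rich if and only if any two factors u and v of x having the same longest palindromic prefix and the same longest palindromic suffix are equal. -/

import Mathlib

/-- The finset of (distinct) palindromic factors of a finite word `w`,
including the empty word. -/
def palFactors {A : Type*} [DecidableEq A] (w : List A) : Finset (List A) :=
  ((w.inits.flatMap List.tails).filter (fun u => u.reverse = u)).toFinset

/-- A finite word `w` is rich if it has exactly `|w| + 1` distinct palindromic factors. -/
def Rich {A : Type*} [DecidableEq A] (w : List A) : Prop :=
  (palFactors w).card = w.length + 1

/-- A finite word `u` is a factor of the infinite word `x : ℕ → A` if it occurs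
at some position `i` in `x`. -/
def FactorOfInf {A : Type*} (u : List A) (x : ℕ → A) : Prop :=
  ∃ i : ℕ, u = (List.range u.length).map fun k => x (i + k)

/-- An infinite word is rich if all of its factors are rich. -/
def RichInf {A : Type*} [DecidableEq A] (x : ℕ → A) : Prop :=
  ∀ u : List A, FactorOfInf u x → Rich u

/-- `p` is the longest palindromic prefix of `u`. -/
def LongestPalPrefix {A : Type*} (p u : List A) : Prop :=
  p <+: u ∧ p.reverse = p ∧ ∀ p' : List A, p' <+: u → p'.reverse = p' → p'.length ≤ p.length

/-- `q` is the longest palindromic suffix of `u`. -/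
def LongestPalSuffix {A : Type*} (q u : List A) : Prop :=
  q <:+ u ∧ q.reverse = q ∧ ∀ q' : List A, q' <:+ u → q'.reverse = q' → q'.length ≤ q.length

/-!
Adding a letter to a word `w` creates at most one new palindromic factor, namely `lps (w ++ [a])`,
so `w` is rich iff the longest palindromic suffix of each prefix of `w` is unioccurrent in it.

If some factor is not rich, a prefix `s` has its longest palindromic suffix `P` occurring earlier
in `s`; a shortest suffix of `s` properly starting with `P` is then a factor different from `P`
whose longest palindromic prefix and suffix are both `P`, just like `P` itself.

Conversely, in a rich word complete returns to palindromes are palindromes. So if the first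
occurrence of a factor `z` precedes every occurrence of `z.reverse`, it ends where the first
occurrence of `lps z` ends: an earlier occurrence of `lps z` would start a complete return to it
having `z` as a suffix, hence `z.reverse` as a prefix. A factor `u` is thus the suffix, ending
there, whose longest palindromic prefix is `lpp u`, and this suffix is unique because `lpp u` is
unioccurrent in it. Applying this to `u` or `u.reverse`, whichever occurs first, recovers `u`
from `lpp u` and `lps u`.
-/

open List

section Factors

variable {A : Type*}

def seg (x : ℕ → A) (i n : ℕ) : List A := (range n).map fun k => x (i + k)

lemma length_seg (x : ℕ → A) (i n : ℕ) : (seg x i n).length = n := by simp [seg]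

lemma seg_append_seg {x : ℕ → A} {i j m n : ℕ} (h : i + m = j) :
    seg x i m ++ seg x j n = seg x i (m + n) := by
  subst h
  simp [seg, range_add, Nat.add_assoc]

lemma seg_of_append_eq {x : ℕ → A} {i n : ℕ} {s t : List A} (h : s ++ t = seg x i n) :
    seg x i s.length = s ∧ seg x (i + s.length) t.length = t := by
  have hn : n = s.length + t.length := by rw [← length_seg x i n, ← h, length_append]
  rw [hn, ← seg_append_seg rfl] at h
  obtain ⟨hs, ht⟩ := append_inj h (length_seg ..).symm
  exact ⟨hs.symm, ht.symm⟩

lemma seg_eq_of_prefix {x : ℕ → A} {i : ℕ} {u z : List A} (hu : seg x i u.length = u)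
    (hz : z <+: u) : seg x i z.length = z := by
  obtain ⟨t, rfl⟩ := hz
  exact (seg_of_append_eq hu.symm).1

lemma factorOfInf_iff {x : ℕ → A} {u : List A} : FactorOfInf u x ↔ ∃ i, seg x i u.length = u :=
  exists_congr fun _ => eq_comm

lemma FactorOfInf.of_infix {x : ℕ → A} {u z : List A} (hu : FactorOfInf u x) (hz : z <:+: u) :
    FactorOfInf z x := by
  obtain ⟨i, hi⟩ := factorOfInf_iff.1 hu
  obtain ⟨s, t, rfl⟩ := hz
  rw [append_assoc] at hi
  exact factorOfInf_iff.2 ⟨_, seg_eq_of_prefix (seg_of_append_eq hi.symm).2 (prefix_append z t)⟩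

def IsCompleteReturn (P r : List A) : Prop :=
  P <+: r ∧ P <:+ r ∧ ∀ s t, s ++ P ++ t = r → s = [] ∨ t = []

lemma isCompleteReturn_seg {x : ℕ → A} {P : List A} {j n : ℕ} (hPn : P.length ≤ n)
    (hj : seg x j P.length = P) (hend : seg x (j + (n - P.length)) P.length = P)
    (hmax : ∀ k, j < k → k + P.length < j + n → seg x k P.length ≠ P) :
    IsCompleteReturn P (seg x j n) := by
  refine ⟨⟨seg x (j + P.length) (n - P.length), ?_⟩, ⟨seg x j (n - P.length), ?_⟩, ?_⟩
  · have h := seg_append_seg (x := x) (n := n - P.length) (rfl : j + P.length = _)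
    rwa [hj, Nat.add_sub_cancel' hPn] at h
  · have h := seg_append_seg (x := x) (n := P.length) (rfl : j + (n - P.length) = _)
    rwa [hend, Nat.sub_add_cancel hPn] at h
  · intro s t hst
    have hlen := congrArg length hst
    simp only [length_append, length_seg] at hlen
    have hocc := (seg_of_append_eq (seg_of_append_eq hst).1.symm).2
    by_contra! h
    have hs := length_pos_iff.2 h.1
    have ht := length_pos_iff.2 h.2
    exact hmax _ (by omega) (by omega) hocc

-- junk value `0` when `z` does not occur in `x`
noncomputable def firstOcc (x : ℕ → A) (z : List A) : ℕ := sInf {i | seg x i z.length = z}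

lemma seg_firstOcc {x : ℕ → A} {z : List A} {i : ℕ} (h : seg x i z.length = z) :
    seg x (firstOcc x z) z.length = z :=
  Nat.sInf_mem (s := {i | seg x i z.length = z}) ⟨i, h⟩

lemma firstOcc_le {x : ℕ → A} {z : List A} {i : ℕ} (h : seg x i z.length = z) :
    firstOcc x z ≤ i :=
  Nat.sInf_le h

def FirstBeforeReverse (x : ℕ → A) (u : List A) : Prop :=
  seg x (firstOcc x u) u.length = u ∧ ∀ k, seg x k u.length = u.reverse → firstOcc x u ≤ k

lemma firstBeforeReverse_or {x : ℕ → A} {u : List A} {i : ℕ} (h : seg x i u.length = u) :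
    FirstBeforeReverse x u ∨ FirstBeforeReverse x u.reverse := by
  by_cases hrev : ∀ k, seg x k u.length = u.reverse → firstOcc x u ≤ k
  · exact Or.inl ⟨seg_firstOcc h, hrev⟩
  push Not at hrev
  obtain ⟨k, hk, hlt⟩ := hrev
  rw [← length_reverse] at hk
  refine Or.inr ⟨seg_firstOcc hk, fun k' hk' => ?_⟩
  rw [length_reverse, reverse_reverse] at hk'
  have := firstOcc_le hk
  have := firstOcc_le hk'
  omega

end Factors

section Palindromes

variable {A : Type*} [DecidableEq A]

def lps : List A → List A
  | [] => []
  | a :: w => if (a :: w).reverse = a :: w then a :: w else lps w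

def lpp (w : List A) : List A := lps w.reverse

lemma lps_suffix (w : List A) : lps w <:+ w := by
  induction w with
  | nil => exact suffix_rfl
  | cons a w ih =>
    rw [lps]
    split
    · exact suffix_rfl
    · exact ih.trans (suffix_cons a w)

lemma lps_reverse_eq (w : List A) : (lps w).reverse = lps w := by
  induction w with
  | nil => rfl
  | cons a w ih =>
    rw [lps]
    split <;> assumption

lemma length_le_length_lps {s w : List A} (hs : s <:+ w) (hp : s.reverse = s) :
    s.length ≤ (lps w).length := by
  induction w with
  | nil => simp [suffix_nil.1 hs]
  | cons a w ih =>
    rw [lps]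
    split
    · exact hs.length_le
    · rcases suffix_cons_iff.1 hs with rfl | h
      · contradiction
      · exact ih h

lemma lps_eq_self {w : List A} (hw : w.reverse = w) : lps w = w :=
  ((lps_suffix w).eq_of_length
    (le_antisymm (lps_suffix w).length_le (length_le_length_lps suffix_rfl hw)))

lemma lps_eq_lps_of_suffix {s t : List A} (hts : t <:+ s) (hst : lps s <:+ t) :
    lps t = lps s := by
  have hle := length_le_length_lps ((lps_suffix t).trans hts) (lps_reverse_eq t)
  exact (suffix_of_suffix_length_le (lps_suffix t) hst hle).eq_of_length
    (le_antisymm hle (length_le_length_lps hst (lps_reverse_eq s)))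

lemma longestPalSuffix_iff {q u : List A} : LongestPalSuffix q u ↔ q = lps u := by
  constructor
  · rintro ⟨hsuf, hpal, hmax⟩
    have hle := length_le_length_lps hsuf hpal
    exact (suffix_of_suffix_length_le hsuf (lps_suffix u) hle).eq_of_length
      (le_antisymm hle (hmax _ (lps_suffix u) (lps_reverse_eq u)))
  · rintro rfl
    exact ⟨lps_suffix u, lps_reverse_eq u, fun _ => length_le_length_lps⟩

lemma lps_reverse (w : List A) : lps w.reverse = lpp w := rfl

lemma lpp_reverse (w : List A) : lpp w.reverse = lps w := by
  rw [lpp, reverse_reverse]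

lemma lpp_reverse_eq (w : List A) : (lpp w).reverse = lpp w := lps_reverse_eq _

lemma lpp_prefix (w : List A) : lpp w <+: w := by
  have h := reverse_prefix.2 (lps_suffix w.reverse)
  rwa [reverse_reverse, lps_reverse_eq] at h

lemma length_le_length_lpp {s w : List A} (hs : s <+: w) (hp : s.reverse = s) :
    s.length ≤ (lpp w).length := by
  have h := length_le_length_lps (reverse_suffix.2 hs) (by rw [reverse_reverse, hp])
  rwa [length_reverse] at h

lemma lpp_eq_self {w : List A} (hw : w.reverse = w) : lpp w = w := by
  rw [lpp, hw, lps_eq_self hw]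

lemma longestPalPrefix_iff {p u : List A} : LongestPalPrefix p u ↔ p = lpp u := by
  constructor
  · rintro ⟨hpre, hpal, hmax⟩
    have hle := length_le_length_lpp hpre hpal
    exact (prefix_of_prefix_length_le hpre (lpp_prefix u) hle).eq_of_length
      (le_antisymm hle (hmax _ (lpp_prefix u) (lpp_reverse_eq u)))
  · rintro rfl
    exact ⟨lpp_prefix u, lpp_reverse_eq u, fun _ => length_le_length_lpp⟩

lemma mem_palFactors {u w : List A} : u ∈ palFactors w ↔ u <:+: w ∧ u.reverse = u := by
  simp only [palFactors, mem_toFinset, mem_filter, mem_flatMap, mem_inits, mem_tails,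
    decide_eq_true_eq, infix_iff_suffix_prefix]
  exact and_congr_left' ⟨fun ⟨t, h₁, h₂⟩ => ⟨t, h₂, h₁⟩, fun ⟨t, h₁, h₂⟩ => ⟨t, h₂, h₁⟩⟩

lemma palFactors_concat (w : List A) (a : A) :
    palFactors (w ++ [a]) = insert (lps (w ++ [a])) (palFactors w) := by
  ext u
  simp only [Finset.mem_insert, mem_palFactors, infix_concat_iff]
  constructor
  · rintro ⟨hsuf | hinf, hpal⟩
    · have hle := length_le_length_lps hsuf hpal
      rcases hle.eq_or_lt with heq | hlt
      · exact Or.inl ((suffix_of_suffix_length_le hsuf (lps_suffix _) hle).eq_of_length heq)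
      -- a shorter palindromic suffix of the palindrome `lps (w ++ [a])` is a proper prefix of it
      have huL : u <+: lps (w ++ [a]) := by
        have h := reverse_prefix.2 (suffix_of_suffix_length_le hsuf (lps_suffix _) hle)
        rwa [hpal, lps_reverse_eq] at h
      rcases suffix_concat_iff.1 (lps_suffix (w ++ [a])) with hL | ⟨t, hLt, htw⟩
      · simp [hL] at hlt
      · rw [hLt] at huL hlt
        rcases prefix_concat_iff.1 huL with rfl | hut
        · simp at hlt
        · exact Or.inr ⟨hut.isInfix.trans htw.isInfix, hpal⟩
    · exact Or.inr ⟨hinf, hpal⟩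
  · rintro (rfl | ⟨hinf, hpal⟩)
    · exact ⟨Or.inl (lps_suffix _), lps_reverse_eq _⟩
    · exact ⟨Or.inr hinf, hpal⟩

lemma card_palFactors_le (w : List A) : (palFactors w).card ≤ w.length + 1 := by
  induction w using reverseRecOn with
  | nil => simp [palFactors]
  | append_singleton w a ih =>
    rw [palFactors_concat, length_append, length_singleton]
    exact (Finset.card_insert_le _ _).trans (by omega)

lemma rich_nil : Rich ([] : List A) := by
  simp [Rich, palFactors]

lemma rich_concat_iff {w : List A} {a : A} :
    Rich (w ++ [a]) ↔ Rich w ∧ lps (w ++ [a]) ∉ palFactors w := by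
  rw [Rich, Rich, palFactors_concat, length_append, length_singleton]
  by_cases h : lps (w ++ [a]) ∈ palFactors w
  · have := card_palFactors_le w
    rw [Finset.insert_eq_of_mem h]
    simp only [h, not_true_eq_false, and_false, iff_false]
    omega
  · rw [Finset.card_insert_of_notMem h]
    simp [h]

lemma rich_reverse {w : List A} (hw : Rich w) : Rich w.reverse := by
  have : palFactors w.reverse = palFactors w := by
    ext u
    simp only [mem_palFactors]
    refine and_congr_left fun hu => ?_
    rw [← reverse_infix, reverse_reverse, hu]
  rwa [Rich, this, length_reverse]

lemma Rich.eq_nil_of_append_lps_append {s t w : List A} (hw : Rich w)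
    (h : s ++ lps w ++ t = w) : t = [] := by
  rcases eq_nil_or_concat t with rfl | ⟨t, a, rfl⟩
  · rfl
  · have hw' : s ++ lps w ++ t ++ [a] = w := by simpa using h
    have hnot := (rich_concat_iff.1 (hw' ▸ hw)).2
    rw [hw'] at hnot
    exact absurd (mem_palFactors.2 ⟨infix_append _ _ _, lps_reverse_eq w⟩) hnot

lemma Rich.eq_nil_of_append_lpp_append {s t w : List A} (hw : Rich w)
    (h : s ++ lpp w ++ t = w) : s = [] := by
  have h' : t.reverse ++ lps w.reverse ++ s.reverse = w.reverse := by
    conv_rhs => rw [← h]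
    simp [lps_reverse, lpp_reverse_eq]
  exact reverse_eq_nil_iff.1 ((rich_reverse hw).eq_nil_of_append_lps_append h')

lemma Rich.reverse_eq_of_isCompleteReturn {P r : List A} (hr : Rich r) (hP : P.reverse = P)
    (hPr : IsCompleteReturn P r) : r.reverse = r := by
  obtain ⟨hpre, hsuf, hret⟩ := hPr
  obtain ⟨a, ha⟩ := lps_suffix r
  have hPQ : P <:+ lps r :=
    suffix_of_suffix_length_le hsuf (lps_suffix r) (length_le_length_lps hsuf hP)
  obtain ⟨b, hb⟩ : P <+: lps r := by
    have h := reverse_prefix.2 hPQ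
    rwa [hP, lps_reverse_eq] at h
  rcases hret a b (by rw [append_assoc, hb, ha]) with rfl | rfl
  · rw [← ha, nil_append, lps_reverse_eq]
  · obtain ⟨c, hc⟩ := hpre
    rw [append_nil] at hb
    have hc' : [] ++ lps r ++ c = r := by rw [← hb, nil_append, hc]
    rw [← hc, hr.eq_nil_of_append_lps_append hc', append_nil, hP]

lemma exists_prefix_lps_append_of_not_rich {w : List A} (hw : ¬ Rich w) :
    ∃ s, s <+: w ∧ ∃ a b, a ++ lps s ++ b = s ∧ b ≠ [] := by
  induction w using reverseRecOn with
  | nil => exact absurd rich_nil hw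
  | append_singleton w c ih =>
    rcases not_and_or.1 (mt rich_concat_iff.2 hw) with hw' | hmem
    · obtain ⟨s, hs, hdec⟩ := ih hw'
      exact ⟨s, hs.trans (prefix_append w [c]), hdec⟩
    · obtain ⟨a, b, hab⟩ := (mem_palFactors.1 (not_not.1 hmem)).1
      refine ⟨w ++ [c], prefix_rfl, a, b ++ [c], ?_, by simp⟩
      conv_rhs => rw [← hab]
      simp

lemma exists_suffix_lpp_eq_lps {s t : List A} (hts : t <:+ s) (hpre : lps s <+: t)
    (hlt : (lps s).length < t.length) :
    ∃ u, u <:+ s ∧ lpp u = lps s ∧ lps u = lps s ∧ (lps s).length < u.length := by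
  have hPt : lps s <:+ t := suffix_of_suffix_length_le (lps_suffix s) hts hlt.le
  by_cases hQ : lpp t = lps s
  · exact ⟨t, hts, hQ, lps_eq_lps_of_suffix hts hPt, hlt⟩
  -- a longer palindromic prefix `Q = d ++ lps s` of `t = Q ++ c` exhibits the later occurrence
  -- `lps s ++ c` of `lps s` in `t`
  have hle := length_le_length_lpp hpre (lps_reverse_eq s)
  have hPQ := prefix_of_prefix_length_le hpre (lpp_prefix t) hle
  obtain ⟨d, hd⟩ : lps s <:+ lpp t := by
    have h := reverse_suffix.2 hPQ
    rwa [lps_reverse_eq, lpp_reverse_eq] at h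
  obtain ⟨c, hc⟩ := lpp_prefix t
  have hd0 : d ≠ [] := by rintro rfl; exact hQ (by rw [← hd, nil_append])
  have hts' : lps s ++ c <:+ s := (suffix_append d _).trans (by rwa [← append_assoc, hd, hc])
  have hlen : (lps s ++ c).length < t.length := by
    rw [← hc, ← hd]
    simp [length_pos_iff.2 hd0]
  by_cases hc0 : c = []
  · rw [hc0, append_nil] at hc
    have := length_le_length_lps hts (hc ▸ lpp_reverse_eq t)
    omega
  · exact exists_suffix_lpp_eq_lps hts' (prefix_append _ _) (by simp [length_pos_iff.2 hc0])
termination_by t.length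
decreasing_by simpa using hlen

lemma RichInf.rich_seg {x : ℕ → A} (hx : RichInf x) (i n : ℕ) : Rich (seg x i n) :=
  hx _ ⟨i, by rw [length_seg]; rfl⟩

lemma RichInf.exists_seg_reverse_lt {x : ℕ → A} (hx : RichInf x) {z : List A} {i j : ℕ}
    (hz : seg x i z.length = z) (hj : seg x j (lps z).length = lps z)
    (hji : j + (lps z).length < i + z.length) :
    ∃ k < i, seg x k z.length = z.reverse := by
  obtain ⟨s, hs⟩ := lps_suffix z
  have hsn := congrArg length hs
  rw [length_append] at hsn
  set P := lps z
  set m := P.length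
  set n := z.length
  -- `j₀` is the last occurrence of `P` that ends before `z` does
  set j₀ := Nat.findGreatest (fun j => seg x j m = P) (i + n - m - 1)
  have hj₀ : seg x j₀ m = P :=
    Nat.findGreatest_spec (P := fun j => seg x j m = P) (by omega : j ≤ i + n - m - 1) hj
  have hj₀le : j₀ ≤ i + n - m - 1 := Nat.findGreatest_le _
  have hj₀i : j₀ < i := by
    by_contra! hij
    have hsplit : seg x i (j₀ - i) ++ P ++ seg x (j₀ + m) (i + n - j₀ - m) = z := by
      rw [← hj₀, append_assoc, seg_append_seg rfl, seg_append_seg (by omega : i + (j₀ - i) = j₀),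
        ← hz]
      congr 1
      omega
    have h := congrArg length ((hz ▸ hx.rich_seg i n).eq_nil_of_append_lps_append hsplit)
    rw [length_seg, length_nil] at h
    omega
  have hend : seg x (j₀ + (i + n - j₀ - m)) m = P := by
    rw [show j₀ + (i + n - j₀ - m) = i + s.length by omega]
    exact (seg_of_append_eq (hs.trans hz.symm)).2
  have hr := isCompleteReturn_seg (by omega) hj₀ hend fun k hk hkm =>
    Nat.findGreatest_is_greatest (P := fun j => seg x j m = P) hk (by omega)
  have hrpal := (hx.rich_seg _ _).reverse_eq_of_isCompleteReturn (lps_reverse_eq z) hr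
  have hzr : z.reverse <+: seg x j₀ (i + n - j₀) := by
    rw [← hrpal, reverse_prefix]
    refine ⟨seg x j₀ (i - j₀), ?_⟩
    rw [← hz, seg_append_seg (by omega : j₀ + (i - j₀) = i)]
    congr 1
    omega
  refine ⟨j₀, hj₀i, ?_⟩
  have h := seg_eq_of_prefix (i := j₀) (u := seg x j₀ (i + n - j₀)) (by rw [length_seg]) hzr
  rwa [length_reverse] at h

lemma FirstBeforeReverse.firstOcc_lps_add_length {x : ℕ → A} {u : List A} (hx : RichInf x)
    (hu : FirstBeforeReverse x u) :
    firstOcc x (lps u) + (lps u).length = firstOcc x u + u.length := by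
  obtain ⟨hocc, hrev⟩ := hu
  obtain ⟨s, hs⟩ := lps_suffix u
  have hq := (seg_of_append_eq (hs.trans hocc.symm)).2
  have hlen := congrArg length hs
  rw [length_append] at hlen
  have hle := firstOcc_le hq
  by_contra hne
  obtain ⟨k, hk, hku⟩ := hx.exists_seg_reverse_lt hocc (seg_firstOcc hq) (by omega)
  exact absurd (hrev k hku) (by omega)

lemma RichInf.eq_of_seg_of_lpp_eq {x : ℕ → A} (hx : RichInf x) {u v : List A} {i j : ℕ}
    (hu : seg x i u.length = u) (hv : seg x j v.length = v)
    (hend : i + u.length = j + v.length) (hp : lpp u = lpp v) : u = v := by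
  wlog hle : u.length ≤ v.length generalizing u v i j
  · exact (this hv hu hend.symm hp.symm (by omega)).symm
  have hsplit := seg_append_seg (x := x) (n := u.length)
    (by omega : j + (v.length - u.length) = i)
  rw [hu, Nat.sub_add_cancel hle, hv] at hsplit
  obtain ⟨t, ht⟩ := lpp_prefix u
  have hnil := (hv ▸ hx.rich_seg j v.length).eq_nil_of_append_lpp_append
    (s := seg x j (v.length - u.length)) (t := t) (by rw [← hp, append_assoc, ht, hsplit])
  rwa [hnil, nil_append] at hsplit

lemma RichInf.eq_of_firstBeforeReverse {x : ℕ → A} (hx : RichInf x) {u v : List A}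
    (hu : FirstBeforeReverse x u) (hv : FirstBeforeReverse x v)
    (hp : lpp u = lpp v) (hq : lps u = lps v) : u = v :=
  hx.eq_of_seg_of_lpp_eq hu.1 hv.1
    (by rw [← hu.firstOcc_lps_add_length hx, ← hv.firstOcc_lps_add_length hx, hq]) hp

lemma RichInf.eq_of_firstBeforeReverse_reverse {x : ℕ → A} (hx : RichInf x) {u v : List A}
    (hu : FirstBeforeReverse x u) (hv : FirstBeforeReverse x v.reverse)
    (hp : lpp u = lpp v) (hq : lps u = lps v) : u = v := by
  have hu' := hu.firstOcc_lps_add_length hx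
  have hv' := hv.firstOcc_lps_add_length hx
  rw [lps_reverse, ← hp, length_reverse] at hv'
  have hpu := firstOcc_le (seg_eq_of_prefix hu.1 (lpp_prefix u))
  have hqv := firstOcc_le (seg_eq_of_prefix hv.1 (z := lps u) (by
    rw [hq, ← lpp_reverse]; exact lpp_prefix _))
  -- summing `hu'`, `hv'`, `hpu`, `hqv`: `|u| + |v| ≤ |lpp u| + |lps v|`
  have hlpp := (lpp_prefix u).length_le
  have hlps := (lps_suffix v).length_le
  rw [← hq] at hlps
  have hu_pal : u.reverse = u := by
    rw [← (lpp_prefix u).eq_of_length (by omega)]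
    exact lpp_reverse_eq u
  have hv_pal : v.reverse = v := by
    rw [← (lps_suffix v).eq_of_length (by rw [← hq]; omega)]
    exact lps_reverse_eq v
  rw [← lps_eq_self hu_pal, hq, lps_eq_self hv_pal]

theorem RichInf.eq_of_lpp_eq_of_lps_eq {x : ℕ → A} (hx : RichInf x) {u v : List A}
    (hu : FactorOfInf u x) (hv : FactorOfInf v x) (hp : lpp u = lpp v) (hq : lps u = lps v) :
    u = v := by
  obtain ⟨i, hi⟩ := factorOfInf_iff.1 hu
  obtain ⟨j, hj⟩ := factorOfInf_iff.1 hv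
  rcases firstBeforeReverse_or hi with hu' | hu' <;>
    rcases firstBeforeReverse_or hj with hv' | hv'
  · exact hx.eq_of_firstBeforeReverse hu' hv' hp hq
  · exact hx.eq_of_firstBeforeReverse_reverse hu' hv' hp hq
  · exact (hx.eq_of_firstBeforeReverse_reverse hv' hu' hp.symm hq.symm).symm
  · exact reverse_injective (hx.eq_of_firstBeforeReverse hu' hv'
      (by rw [lpp_reverse, lpp_reverse, hq]) (by rw [lps_reverse, lps_reverse, hp]))

theorem richInf_of_eq_of_lpp_eq_of_lps_eq {x : ℕ → A}
    (h : ∀ u v, FactorOfInf u x → FactorOfInf v x → lpp u = lpp v → lps u = lps v → u = v) :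
    RichInf x := by
  intro w hw
  by_contra hnr
  obtain ⟨s, hsw, a, b, hab, hb⟩ := exists_prefix_lps_append_of_not_rich hnr
  have hs : FactorOfInf s x := hw.of_infix hsw.isInfix
  obtain ⟨u, hus, hp, hq, hlt⟩ := exists_suffix_lpp_eq_lps (t := lps s ++ b)
    ⟨a, by rw [← append_assoc, hab]⟩ (prefix_append _ _) (by simp [length_pos_iff.2 hb])
  have hP := lps_reverse_eq s
  have heq := h u (lps s) (hs.of_infix hus.isInfix) (hs.of_infix (lps_suffix s).isInfix)
    (by rw [hp, lpp_eq_self hP]) (by rw [hq, lps_eq_self hP])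
  exact absurd (congrArg length heq) hlt.ne'

end Palindromes

/-- An infinite word `x` is rich if and only if any two factors `u` and `v` of `x`
having the same longest palindromic prefix and the same longest palindromic suffix
are equal. -/
theorem richInf_iff_factors_determined_by_pal_prefix_suffix {A : Type*} [DecidableEq A]
    (x : ℕ → A) :
    RichInf x ↔ ∀ u v p q : List A, FactorOfInf u x → FactorOfInf v x →
      LongestPalPrefix p u → LongestPalPrefix p v →
      LongestPalSuffix q u → LongestPalSuffix q v → u = v := by
  simp only [longestPalPrefix_iff, longestPalSuffix_iff]
  constructor
  · rintro hx u v p q hu hv rfl hp rfl hq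
    exact hx.eq_of_lpp_eq_of_lps_eq hu hv hp hq
  · exact fun h => richInf_of_eq_of_lpp_eq_of_lps_eq fun u v hu hv hp hq =>
      h u v _ _ hu hv rfl hp rfl hq
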